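/- Let (q, p, H) solve the Painlevé III′ Hamiltonian system with parameters v1, v2 ∈ ℂ on an open set U ⊆ ℂ with 0 ∉ U. Let V := {t ∈ ℂ : t ≠ 0 and t² ∈ U}, and define Q(t) := q(t²)/t and P(t) := t·p(t²) on V. Then (Q, P) solves the Painlevé III Hamiltonian system with the same parameters (v1, v2) and η0 = η∞ = 1 on V, and its Hamiltonian H_III satisfies t·H_III(t) = 2·s·H(s) − q(s)·p(s) with s = t², for all t ∈ V. -/

import Mathlib

/-!
With `s = t²` one has `t · d/dt = 2s · d/ds` and `Q P = q p`. Substituting `q = t Q`, `p = P / t`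
into twice the Painlevé III′ equations and Hamiltonian gives the Painlevé III ones with
`η0 = η∞ = 1`, up to the term `-q p` in the Hamiltonian; each step is a rational identity in
`t, q, p`.
-/

open Complex

/-- `(q, p, H)` solves the Painlevé III′ Hamiltonian system with parameters
`v1, v2` on an open set `U ⊆ ℂ` with `0 ∉ U`. -/
def SolvesPIII' (v1 v2 : ℂ) (U : Set ℂ) (q p H : ℂ → ℂ) : Prop :=
  IsOpen U ∧ (0 : ℂ) ∉ U ∧
    DifferentiableOn ℂ q U ∧ DifferentiableOn ℂ p U ∧
    (∀ s ∈ U, s * H s =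
      q s ^ 2 * p s ^ 2 - (q s ^ 2 + v1 * q s - s) * p s
        + (1 / 2) * (v1 + v2) * q s) ∧
    (∀ s ∈ U, s * deriv q s = 2 * q s ^ 2 * p s - q s ^ 2 - v1 * q s + s) ∧
    (∀ s ∈ U, s * deriv p s =
      -2 * q s * p s ^ 2 + 2 * q s * p s + v1 * p s - (1 / 2) * (v1 + v2))

/-- `(q, p, H)` solves the Painlevé III Hamiltonian system with parameters
`v1, v2, η0, ηinf` on an open set `U ⊆ ℂ` with `0 ∉ U`. -/
def SolvesPIII (v1 v2 η0 ηinf : ℂ) (U : Set ℂ) (q p H : ℂ → ℂ) : Prop :=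
  IsOpen U ∧ (0 : ℂ) ∉ U ∧
    DifferentiableOn ℂ q U ∧ DifferentiableOn ℂ p U ∧
    (∀ t ∈ U, t * H t =
      2 * q t ^ 2 * p t ^ 2
        - (2 * ηinf * t * q t ^ 2 + (2 * v1 + 1) * q t - 2 * η0 * t) * p t
        + ηinf * (v1 + v2) * t * q t) ∧
    (∀ t ∈ U, t * deriv q t =
      4 * q t ^ 2 * p t - 2 * ηinf * t * q t ^ 2 - (2 * v1 + 1) * q t + 2 * η0 * t) ∧
    (∀ t ∈ U, t * deriv p t =
      -4 * q t * p t ^ 2 + 4 * ηinf * t * q t * p t + (2 * v1 + 1) * p t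
        - ηinf * (v1 + v2) * t)

theorem isOpen_setOf_ne_zero_and_sq_mem {U : Set ℂ} (hU : IsOpen U) :
    IsOpen {t : ℂ | t ≠ 0 ∧ t ^ 2 ∈ U} :=
  isOpen_compl_singleton.inter (hU.preimage (continuous_pow 2))

section Derivatives

variable {𝕜 : Type*} [NontriviallyNormedField 𝕜] {f : 𝕜 → 𝕜} {t : 𝕜}

theorem hasDerivAt_comp_sq (hf : DifferentiableAt 𝕜 f (t ^ 2)) :
    HasDerivAt (fun t => f (t ^ 2)) (2 * t * deriv f (t ^ 2)) t := by
  have hsq : HasDerivAt (fun t : 𝕜 => t ^ 2) (2 * t) t := by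
    simpa using hasDerivAt_pow 2 t
  exact (hf.hasDerivAt.comp t hsq).congr_deriv (mul_comm _ _)

theorem hasDerivAt_comp_sq_div (hf : DifferentiableAt 𝕜 f (t ^ 2)) (ht : t ≠ 0) :
    HasDerivAt (fun t => f (t ^ 2) / t) ((2 * t ^ 2 * deriv f (t ^ 2) - f (t ^ 2)) / t ^ 2) t :=
  ((hasDerivAt_comp_sq hf).div (hasDerivAt_id' t) ht).congr_deriv (by ring)

theorem hasDerivAt_mul_comp_sq (hf : DifferentiableAt 𝕜 f (t ^ 2)) :
    HasDerivAt (fun t => t * f (t ^ 2)) (f (t ^ 2) + 2 * t ^ 2 * deriv f (t ^ 2)) t :=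
  ((hasDerivAt_id' t).mul (hasDerivAt_comp_sq hf)).congr_deriv (by ring)

end Derivatives

namespace PainleveIIIprime

variable {K : Type*} [Field K] {v1 v2 t q p : K}

theorem hamiltonian_rescale [NeZero (2 : K)] (ht : t ≠ 0) {h : K}
    (hh : t ^ 2 * h = q ^ 2 * p ^ 2 - (q ^ 2 + v1 * q - t ^ 2) * p + (1 / 2) * (v1 + v2) * q) :
    2 * t ^ 2 * h - q * p =
      2 * (q / t) ^ 2 * (t * p) ^ 2 - (2 * t * (q / t) ^ 2 + (2 * v1 + 1) * (q / t) - 2 * t) * (t * p)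
        + (v1 + v2) * t * (q / t) := by
  field_simp at hh ⊢
  linear_combination hh

theorem q_equation_rescale (ht : t ≠ 0) {dq : K}
    (hdq : t ^ 2 * dq = 2 * q ^ 2 * p - q ^ 2 - v1 * q + t ^ 2) :
    t * ((2 * t ^ 2 * dq - q) / t ^ 2) =
      4 * (q / t) ^ 2 * (t * p) - 2 * t * (q / t) ^ 2 - (2 * v1 + 1) * (q / t) + 2 * t := by
  field_simp
  linear_combination 2 * hdq

theorem p_equation_rescale [NeZero (2 : K)] {dp : K}
    (hdp : t ^ 2 * dp = -2 * q * p ^ 2 + 2 * q * p + v1 * p - (1 / 2) * (v1 + v2)) :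
    t * (p + 2 * t ^ 2 * dp) =
      -4 * (q / t) * (t * p) ^ 2 + 4 * t * (q / t) * (t * p) + (2 * v1 + 1) * (t * p)
        - (v1 + v2) * t := by
  field_simp at hdp ⊢
  linear_combination t * hdp

end PainleveIIIprime

open PainleveIIIprime in
/-- The change of variables `Q(t) = q(t²)/t`, `P(t) = t·p(t²)` maps a solution
of the Painlevé III′ Hamiltonian system with parameters `(v1, v2)` to a
solution of the Painlevé III Hamiltonian system with the same parameters and
`η0 = ηinf = 1`, with `t·H_III(t) = 2s·H(s) − q(s)p(s)` where `s = t²`. -/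
theorem painleveIIIprime_to_painleveIII (v1 v2 : ℂ) (U : Set ℂ)
    (q p H : ℂ → ℂ)
    (hsol : SolvesPIII' v1 v2 U q p H)
    (V : Set ℂ) (hV : V = {t : ℂ | t ≠ 0 ∧ t ^ 2 ∈ U})
    (Q P : ℂ → ℂ)
    (hQ : ∀ t ∈ V, Q t = q (t ^ 2) / t)
    (hP : ∀ t ∈ V, P t = t * p (t ^ 2)) :
    ∃ HIII : ℂ → ℂ,
      SolvesPIII v1 v2 1 1 V Q P HIII ∧
      ∀ t ∈ V, t * HIII t = 2 * (t ^ 2) * H (t ^ 2) - q (t ^ 2) * p (t ^ 2) := by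
  obtain ⟨hUo, -, hq, hp, hH, hq', hp'⟩ := hsol
  subst hV
  have hVo := isOpen_setOf_ne_zero_and_sq_mem hUo
  have hQd : ∀ t ∈ {t : ℂ | t ≠ 0 ∧ t ^ 2 ∈ U},
      HasDerivAt Q ((2 * t ^ 2 * deriv q (t ^ 2) - q (t ^ 2)) / t ^ 2) t := fun t ht =>
    (hasDerivAt_comp_sq_div (hq.differentiableAt (hUo.mem_nhds ht.2)) ht.1).congr_of_eventuallyEq
      (Filter.eventuallyEq_of_mem (hVo.mem_nhds ht) hQ)
  have hPd : ∀ t ∈ {t : ℂ | t ≠ 0 ∧ t ^ 2 ∈ U},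
      HasDerivAt P (p (t ^ 2) + 2 * t ^ 2 * deriv p (t ^ 2)) t := fun t ht =>
    (hasDerivAt_mul_comp_sq (hp.differentiableAt (hUo.mem_nhds ht.2))).congr_of_eventuallyEq
      (Filter.eventuallyEq_of_mem (hVo.mem_nhds ht) hP)
  refine ⟨fun t => (2 * t ^ 2 * H (t ^ 2) - q (t ^ 2) * p (t ^ 2)) / t,
    ⟨hVo, fun h => h.1 rfl, fun t ht => (hQd t ht).differentiableAt.differentiableWithinAt,
      fun t ht => (hPd t ht).differentiableAt.differentiableWithinAt, fun t ht => ?_,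
      fun t ht => ?_, fun t ht => ?_⟩, fun t ht => mul_div_cancel₀ _ ht.1⟩
  · rw [mul_div_cancel₀ _ ht.1, hQ t ht, hP t ht]
    linear_combination hamiltonian_rescale ht.1 (hH _ ht.2)
  · rw [(hQd t ht).deriv, hQ t ht, hP t ht]
    linear_combination q_equation_rescale ht.1 (hq' _ ht.2)
  · rw [(hPd t ht).deriv, hQ t ht, hP t ht]
    linear_combination p_equation_rescale (hp' _ ht.2)
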